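/- Let M = (M_i)_{i∈I} be a POVM on ℂ^d and let ρ, σ be quantum states with (1/2)‖ρ − σ‖₁ ≤ ε. Then |S_M(ρ) − S_M(σ)| ≤ g(ε) + ε·log d. -/

import Mathlib

open scoped BigOperators ComplexOrder Classical

noncomputable section

/-- Shannon entropy of a finitely supported distribution, with `0 log 0 = 0`. -/
def shannonEntropy {ι : Type*} [Fintype ι] (p : ι → ℝ) : ℝ :=
  -∑ i, p i * Real.log (p i)

/-- A quantum state: positive semidefinite with unit trace. -/
def IsState {n : Type*} [Fintype n] (ρ : Matrix n n ℂ) : Prop :=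
  ρ.PosSemidef ∧ ρ.trace = 1

/-- A POVM: positive semidefinite elements summing to the identity. -/
def IsPOVM {ι n : Type*} [Fintype ι] [Fintype n] [DecidableEq n]
    (M : ι → Matrix n n ℂ) : Prop :=
  (∀ i, (M i).PosSemidef) ∧ ∑ i, M i = 1

/-- Observational entropy `S_M(ρ) = -∑ p_i log (p_i / V_i)`. -/
def obsEntropy {ι n : Type*} [Fintype ι] [Fintype n]
    (M : ι → Matrix n n ℂ) (ρ : Matrix n n ℂ) : ℝ :=
  -∑ i, ((M i * ρ).trace.re * Real.log ((M i * ρ).trace.re / (M i).trace.re))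

/-- The function `g(x) = -x log x + (1+x) log(1+x)`. -/
def gFun (x : ℝ) : ℝ := -(x * Real.log x) + (1 + x) * Real.log (1 + x)

/-- Trace norm of a square complex matrix. -/
def traceNorm {n : Type*} [Fintype n] [DecidableEq n] (X : Matrix n n ℂ) : ℝ :=
  (((Matrix.posSemidef_conjTranspose_mul_self X).1.eigenvectorUnitary : Matrix n n ℂ) *
    Matrix.diagonal (((↑) : ℝ → ℂ) ∘ (√·) ∘ (Matrix.posSemidef_conjTranspose_mul_self X).1.eigenvalues) *
    (star (Matrix.posSemidef_conjTranspose_mul_self X).1.eigenvectorUnitary : Matrix n n ℂ)).trace.re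

/-- Matrix logarithm of a Hermitian matrix via the spectral decomposition,
with the convention `log 0 = 0` on the kernel; junk value `0` on non-Hermitian input. -/
def matLog {n : Type*} [Fintype n] [DecidableEq n] (A : Matrix n n ℂ) : Matrix n n ℂ :=
  if hA : A.IsHermitian then
    (hA.eigenvectorUnitary : Matrix n n ℂ) *
      Matrix.diagonal (fun i => (Real.log (hA.eigenvalues i) : ℂ)) *
      (star (hA.eigenvectorUnitary : Matrix n n ℂ))
  else 0

/-- Von Neumann entropy `S(ρ) = -tr(ρ log ρ)`. -/
def vnEntropy {n : Type*} [Fintype n] [DecidableEq n] (ρ : Matrix n n ℂ) : ℝ :=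
  -((ρ * matLog ρ).trace.re)

/-- Quantum relative entropy, as an extended real number: `tr(μ (log μ - log ν))` when
`supp μ ⊆ supp ν` (both Hermitian), and `+∞` otherwise. -/
def qRelEntropy {n : Type*} [Fintype n] [DecidableEq n] (μ ν : Matrix n n ℂ) : EReal :=
  if μ.IsHermitian ∧ ν.IsHermitian ∧
      LinearMap.range (Matrix.toLin' μ) ≤ LinearMap.range (Matrix.toLin' ν) then
    (((μ * (matLog μ - matLog ν)).trace.re : ℝ) : EReal)
  else ⊤

/-- Real-valued quantum relative entropy `tr(μ (log μ - log ν))` (meaningful when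
`supp μ ⊆ supp ν`). -/
def qRelEntropyR {n : Type*} [Fintype n] [DecidableEq n] (μ ν : Matrix n n ℂ) : ℝ :=
  (μ * (matLog μ - matLog ν)).trace.re

/-!
Write `ρ - σ = P - N` with `P, N` its positive and negative parts, so that `tr P = tr N = e`,
`e = ½‖ρ - σ‖₁`, and `ρ + N = σ + P`. Measuring with `M` turns this into nonnegative vectors with
`p + b = q + a`, where `p ≤ V`, `a, b ≤ e V` for `V i = tr M_i`, and `S_M = -D(·‖V)` with
`D(x‖V) = ∑ x log (x / V)`. Superadditivity of `D` gives `D(q) + D(a) ≤ D(p + b)`; the log-sum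
inequality gives `D(p + b) ≤ D(p) + D(b) + g(e)`, `D(b) ≤ e log e` and `-D(a) ≤ e log (d / e)`.
Adding up, `D(q) - D(p) ≤ g(e) + e log d`; exchanging `ρ` and `σ` and the monotonicity of `g`
finish the proof.
-/

namespace Matrix
open scoped MatrixOrder
variable {n : Type*} [Fintype n]

lemma PosSemidef.re_trace_nonneg {A : Matrix n n ℂ} (hA : A.PosSemidef) : 0 ≤ A.trace.re :=
  (Complex.nonneg_iff.mp hA.trace_nonneg).1

variable [DecidableEq n]

lemma PosSemidef.re_trace_mul_nonneg {A B : Matrix n n ℂ} (hA : A.PosSemidef) (hB : B.PosSemidef) :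
    0 ≤ (A * B).trace.re := by
  have hs := nonneg_iff_posSemidef.mp (CFC.sqrt_nonneg A)
  rw [← CFC.sqrt_mul_sqrt_self A hA.nonneg, ← trace_mul_cycle]
  simpa [hs.isHermitian.eq] using (hB.mul_mul_conjTranspose_same (CFC.sqrt A)).re_trace_nonneg

lemma PosSemidef.le_algebraMap_re_trace {A : Matrix n n ℂ} (hA : A.PosSemidef) :
    A ≤ algebraMap ℝ (Matrix n n ℂ) A.trace.re := by
  rw [le_algebraMap_iff_spectrum_le hA.isHermitian.isSelfAdjoint,
    hA.isHermitian.spectrum_real_eq_range_eigenvalues]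
  rintro _ ⟨i, rfl⟩
  rw [hA.isHermitian.trace_eq_sum_eigenvalues]
  simpa using Finset.single_le_sum (fun j _ => hA.eigenvalues_nonneg j) (Finset.mem_univ i)

lemma PosSemidef.re_trace_mul_le {A B : Matrix n n ℂ} (hA : A.PosSemidef) (hB : B.PosSemidef) :
    (A * B).trace.re ≤ A.trace.re * B.trace.re := by
  have := hA.re_trace_mul_nonneg hB.le_algebraMap_re_trace
  rw [mul_sub, Algebra.algebraMap_eq_smul_one, mul_smul_comm, mul_one, trace_sub, trace_smul,
    Complex.sub_re, Complex.real_smul, Complex.re_ofReal_mul] at this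
  linarith

lemma traceNorm_eq_re_trace_abs (X : Matrix n n ℂ) : traceNorm X = (CFC.abs X).trace.re := by
  rw [CFC.abs, CFC.sqrt_eq_real_sqrt _ (star_mul_self_nonneg X), cfcₙ_eq_cfc,
    star_eq_conjTranspose, (posSemidef_conjTranspose_mul_self X).1.cfc_eq]
  rfl

lemma IsHermitian.traceNorm_eq {X : Matrix n n ℂ} (hX : X.IsHermitian) :
    traceNorm X = (X⁺).trace.re + (X⁻).trace.re := by
  rw [traceNorm_eq_re_trace_abs, ← CFC.posPart_add_negPart X hX.isSelfAdjoint, trace_add,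
    Complex.add_re]

lemma IsHermitian.re_trace_posPart_sub_negPart {X : Matrix n n ℂ} (hX : X.IsHermitian) :
    (X⁺).trace.re - (X⁻).trace.re = X.trace.re := by
  rw [← Complex.sub_re, ← trace_sub, CFC.posPart_sub_negPart X hX.isSelfAdjoint]

lemma posSemidef_posPart (X : Matrix n n ℂ) : (X⁺).PosSemidef :=
  nonneg_iff_posSemidef.mp (CFC.posPart_nonneg X)

lemma posSemidef_negPart (X : Matrix n n ℂ) : (X⁻).PosSemidef :=
  nonneg_iff_posSemidef.mp (CFC.negPart_nonneg X)

end Matrix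

section RelEntropy

variable {ι : Type*} [Fintype ι]

/-- With `p i = tr (M i ρ)` and `V i = tr (M i)`, `obsEntropy M ρ = -relEntropy p V`. -/
def relEntropy (x V : ι → ℝ) : ℝ := ∑ i, x i * Real.log (x i / V i)

lemma mul_log_div_le_mul_log_div {x y V : ℝ} (hx : 0 ≤ x) (hxy : x ≤ y) (hV : 0 ≤ V) :
    x * Real.log (x / V) ≤ x * Real.log (y / V) := by
  rcases hx.eq_or_lt with rfl | hx
  · simp
  rcases hV.eq_or_lt with rfl | hV
  · simp
  exact mul_le_mul_of_nonneg_left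
    (Real.log_le_log (div_pos hx hV) (div_le_div_of_nonneg_right hxy hV.le)) hx.le

lemma mul_log_div_eq_add {x z V : ℝ} (hV : x ≠ 0 → V ≠ 0) (hz : x ≠ 0 → z ≠ 0) :
    x * Real.log (z / V) = x * Real.log (x / V) + x * Real.log (z / x) := by
  rcases eq_or_ne x 0 with rfl | hx
  · simp
  rw [← mul_add, ← Real.log_mul (div_ne_zero hx (hV hx)) (div_ne_zero (hz hx) hx),
    div_mul_div_cancel₀' hx]

lemma mul_log_div_eq_sub {x y : ℝ} (hy : y ≠ 0) :
    x * Real.log (y / x) = x * Real.log y - x * Real.log x := by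
  rcases eq_or_ne x 0 with rfl | hx
  · simp
  rw [Real.log_div hy hx, mul_sub]

/-- Termwise form of the log-sum inequality, from `log t ≤ t - 1` at `t = w / (u c)`. -/
lemma mul_log_div_le {u w c : ℝ} (hu : 0 ≤ u) (hw : 0 ≤ w) (huw : w = 0 → u = 0) (hc : 0 < c) :
    u * Real.log (w / u) ≤ w / c - u + u * Real.log c := by
  rcases hu.eq_or_lt with rfl | hu
  · simpa using div_nonneg hw hc.le
  have hw : 0 < w := hw.lt_of_ne fun h => hu.ne' (huw h.symm)
  have hlog := Real.log_le_sub_one_of_pos (by positivity : 0 < w / (u * c))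
  rw [← div_mul_cancel₀ (w / u) hc.ne', Real.log_mul (by positivity) hc.ne', mul_add,
    div_div]
  have : u * (w / (u * c) - 1) = w / c - u := by field_simp
  linarith [mul_le_mul_of_nonneg_left hlog hu.le]

/-- The log-sum inequality. -/
lemma sum_mul_log_div_le {u w : ι → ℝ} (hu : ∀ i, 0 ≤ u i) (hw : ∀ i, 0 ≤ w i)
    (huw : ∀ i, w i = 0 → u i = 0) :
    ∑ i, u i * Real.log (w i / u i) ≤ (∑ i, u i) * Real.log ((∑ i, w i) / ∑ i, u i) := by
  set U := ∑ i, u i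
  set W := ∑ i, w i
  rcases (Finset.sum_nonneg fun i _ => hu i : 0 ≤ U).eq_or_lt with hU | hU
  · have hu0 : ∀ i, u i = 0 := fun i =>
      (Finset.sum_eq_zero_iff_of_nonneg fun i _ => hu i).mp hU.symm i (Finset.mem_univ i)
    simp [hu0, U]
  have hW : 0 < W := by
    refine (Finset.sum_nonneg fun i _ => hw i).lt_of_ne fun hW => hU.ne' ?_
    refine Finset.sum_eq_zero fun i _ => huw i ?_
    exact (Finset.sum_eq_zero_iff_of_nonneg fun i _ => hw i).mp hW.symm i (Finset.mem_univ i)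
  calc ∑ i, u i * Real.log (w i / u i)
      ≤ ∑ i, (w i / (W / U) - u i + u i * Real.log (W / U)) :=
        Finset.sum_le_sum fun i _ => mul_log_div_le (hu i) (hw i) (huw i) (by positivity)
    _ = W / (W / U) - U + U * Real.log (W / U) := by
        simp only [Finset.sum_add_distrib, Finset.sum_sub_distrib, ← Finset.sum_mul,
          ← Finset.sum_div]
        rfl
    _ = U * Real.log (W / U) := by field_simp; ring

lemma relEntropy_add_relEntropy_le {x y V : ι → ℝ} (hx : ∀ i, 0 ≤ x i) (hy : ∀ i, 0 ≤ y i)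
    (hV : ∀ i, 0 ≤ V i) :
    relEntropy x V + relEntropy y V ≤ relEntropy (x + y) V := by
  rw [relEntropy, relEntropy, relEntropy, ← Finset.sum_add_distrib]
  refine Finset.sum_le_sum fun i _ => ?_
  have hxi := mul_log_div_le_mul_log_div (hx i) (le_add_of_nonneg_right (hy i)) (hV i)
  have hyi := mul_log_div_le_mul_log_div (hy i) (le_add_of_nonneg_left (hx i)) (hV i)
  simp only [Pi.add_apply, add_mul]
  linarith

/-- Mixing two vectors costs at most the binary entropy of their masses. -/
lemma relEntropy_add_le {x y V : ι → ℝ} (hx : ∀ i, 0 ≤ x i) (hy : ∀ i, 0 ≤ y i)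
    (hxV : ∀ i, V i = 0 → x i = 0) (hyV : ∀ i, V i = 0 → y i = 0) :
    relEntropy (x + y) V ≤ relEntropy x V + relEntropy y V +
      (∑ i, x i) * Real.log ((∑ i, x i + ∑ i, y i) / ∑ i, x i) +
      (∑ i, y i) * Real.log ((∑ i, x i + ∑ i, y i) / ∑ i, y i) := by
  have hxy : ∀ i, 0 ≤ x i + y i := fun i => add_nonneg (hx i) (hy i)
  have hx_supp : ∀ i, x i + y i = 0 → x i = 0 := fun i h => by linarith [hx i, hy i]
  have hy_supp : ∀ i, x i + y i = 0 → y i = 0 := fun i h => by linarith [hx i, hy i]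
  have hsplit : ∀ i, (x i + y i) * Real.log ((x i + y i) / V i) =
      x i * Real.log (x i / V i) + y i * Real.log (y i / V i) +
      x i * Real.log ((x i + y i) / x i) + y i * Real.log ((x i + y i) / y i) := fun i => by
    rw [add_mul, mul_log_div_eq_add (mt (hxV i)) (mt (hx_supp i)),
      mul_log_div_eq_add (mt (hyV i)) (mt (hy_supp i))]
    ring
  have hmix : relEntropy (x + y) V = relEntropy x V + relEntropy y V +
      ∑ i, x i * Real.log ((x i + y i) / x i) + ∑ i, y i * Real.log ((x i + y i) / y i) := by
    simp only [relEntropy, Pi.add_apply, hsplit, Finset.sum_add_distrib]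
  have hlx := sum_mul_log_div_le hx hxy hx_supp
  have hly := sum_mul_log_div_le hy hxy hy_supp
  rw [Finset.sum_add_distrib] at hlx hly
  linarith

lemma relEntropy_le_mul_log {x V : ι → ℝ} {c : ℝ} (hx : ∀ i, 0 ≤ x i) (hV : ∀ i, 0 ≤ V i)
    (hxV : ∀ i, x i ≤ c * V i) :
    relEntropy x V ≤ (∑ i, x i) * Real.log c := by
  rw [relEntropy, Finset.sum_mul]
  refine Finset.sum_le_sum fun i _ => ?_
  rcases (hx i).eq_or_lt with h | hxi
  · simp [← h]
  have hV : 0 < V i := (hV i).lt_of_ne fun h => by simpa [← h] using (hxi.trans_le (hxV i))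
  exact mul_le_mul_of_nonneg_left (Real.log_le_log (by positivity)
    ((div_le_iff₀ hV).mpr (hxV i))) hxi.le

lemma neg_relEntropy_le {x V : ι → ℝ} (hx : ∀ i, 0 ≤ x i) (hV : ∀ i, 0 ≤ V i)
    (hxV : ∀ i, V i = 0 → x i = 0) :
    -relEntropy x V ≤ (∑ i, x i) * Real.log ((∑ i, V i) / ∑ i, x i) := by
  have h : -relEntropy x V = ∑ i, x i * Real.log (V i / x i) := by
    simp only [relEntropy, ← Finset.sum_neg_distrib, ← inv_div (V _), Real.log_inv, mul_neg,
      neg_neg]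
  exact h ▸ sum_mul_log_div_le hx hV hxV

lemma relEntropy_sub_le {V p q a b : ι → ℝ} {e : ℝ} (hV : ∀ i, 0 ≤ V i) (hp : ∀ i, 0 ≤ p i)
    (hq : ∀ i, 0 ≤ q i) (ha : ∀ i, 0 ≤ a i) (hb : ∀ i, 0 ≤ b i) (hpV : ∀ i, p i ≤ V i)
    (haV : ∀ i, a i ≤ e * V i) (hbV : ∀ i, b i ≤ e * V i) (hp1 : ∑ i, p i = 1)
    (ha1 : ∑ i, a i = e) (hb1 : ∑ i, b i = e) (hpb : p + b = q + a) :
    relEntropy q V - relEntropy p V ≤ gFun e + e * Real.log (∑ i, V i) := by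
  have hV_supp : ∀ {x : ι → ℝ} {c : ℝ}, (∀ i, 0 ≤ x i) → (∀ i, x i ≤ c * V i) →
      ∀ i, V i = 0 → x i = 0 := fun hx hxV i h => le_antisymm (by simpa [h] using hxV i) (hx i)
  have he : 0 ≤ e := ha1 ▸ Finset.sum_nonneg fun i _ => ha i
  have hVpos : 0 < ∑ i, V i := by
    linarith [Finset.sum_le_sum fun i (_ : i ∈ Finset.univ) => hpV i]
  have hsuper := relEntropy_add_relEntropy_le hq ha hV
  have hmix := relEntropy_add_le hp hb (hV_supp hp (c := 1) (by simpa using hpV)) (hV_supp hb hbV)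
  have hb_le := relEntropy_le_mul_log hb hV hbV
  have ha_ge := neg_relEntropy_le ha hV (hV_supp ha haV)
  rw [hpb, hp1, hb1, one_mul, div_one, mul_log_div_eq_sub (by positivity)] at hmix
  rw [hb1] at hb_le
  rw [ha1, mul_log_div_eq_sub hVpos.ne'] at ha_ge
  rw [gFun]
  linarith

end RelEntropy

lemma gFun_monotoneOn : MonotoneOn gFun (Set.Ici 0) := by
  have hg : gFun = fun x => Real.negMulLog x - Real.negMulLog (1 + x) := by
    ext x; simp [gFun, Real.negMulLog_eq_neg]
  have hderiv : ∀ x : ℝ, 0 < x →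
      HasDerivAt gFun (Real.log (1 + x) - Real.log x) x := fun x hx => by
    rw [hg]
    exact ((Real.hasDerivAt_negMulLog hx.ne').sub
      ((Real.hasDerivAt_negMulLog (by positivity : 1 + x ≠ 0)).comp x
        ((hasDerivAt_id x).const_add 1))).congr_deriv (by ring)
  refine monotoneOn_of_deriv_nonneg (convex_Ici 0) (by rw [hg]; fun_prop) ?_ ?_
  · rw [interior_Ici]
    exact fun x hx => (hderiv x hx).differentiableAt.differentiableWithinAt
  · rw [interior_Ici]
    intro x hx
    rw [(hderiv x hx).deriv, sub_nonneg]
    exact Real.log_le_log hx (by linarith)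

namespace IsPOVM

variable {ι n : Type*} [Fintype ι] [Fintype n] [DecidableEq n] {M : ι → Matrix n n ℂ}

lemma sum_re_trace_mul (hM : IsPOVM M) (A : Matrix n n ℂ) :
    ∑ i, (M i * A).trace.re = A.trace.re := by
  rw [← Complex.re_sum, ← Matrix.trace_sum, ← Finset.sum_mul, hM.2, one_mul]

lemma sum_re_trace (hM : IsPOVM M) : ∑ i, (M i).trace.re = Fintype.card n := by
  simpa using hM.sum_re_trace_mul 1

lemma obsEntropy_sub_le (hM : IsPOVM M) {ρ σ P N : Matrix n n ℂ} {e : ℝ} (hρ : IsState ρ)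
    (hσ : IsState σ) (hP : P.PosSemidef) (hN : N.PosSemidef) (hPe : P.trace.re = e)
    (hNe : N.trace.re = e) (h : ρ + N = σ + P) :
    obsEntropy M ρ - obsEntropy M σ ≤ gFun e + e * Real.log (Fintype.card n) := by
  have hρ1 : ρ.trace.re = 1 := by simp [hρ.2]
  rw [obsEntropy, obsEntropy, neg_sub_neg, ← hM.sum_re_trace]
  refine relEntropy_sub_le (fun i => (hM.1 i).re_trace_nonneg)
    (fun i => (hM.1 i).re_trace_mul_nonneg hρ.1) (fun i => (hM.1 i).re_trace_mul_nonneg hσ.1)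
    (fun i => (hM.1 i).re_trace_mul_nonneg hP) (fun i => (hM.1 i).re_trace_mul_nonneg hN)
    (fun i => by simpa [hρ1] using (hM.1 i).re_trace_mul_le hρ.1)
    (fun i => by simpa [hPe, mul_comm] using (hM.1 i).re_trace_mul_le hP)
    (fun i => by simpa [hNe, mul_comm] using (hM.1 i).re_trace_mul_le hN)
    (hρ1 ▸ hM.sum_re_trace_mul ρ) (hPe ▸ hM.sum_re_trace_mul P) (hNe ▸ hM.sum_re_trace_mul N) ?_
  funext i
  simpa [Matrix.mul_add, Matrix.trace_add] using congrArg (fun A => (M i * A).trace.re) h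

end IsPOVM

theorem obsEntropy_continuity {d : ℕ} {ι : Type*} [Fintype ι]
    (M : ι → Matrix (Fin d) (Fin d) ℂ) (hM : IsPOVM M)
    (ρ σ : Matrix (Fin d) (Fin d) ℂ) (hρ : IsState ρ) (hσ : IsState σ)
    (ε : ℝ) (hε : (1/2) * traceNorm (ρ - σ) ≤ ε) :
    |obsEntropy M ρ - obsEntropy M σ| ≤ gFun ε + ε * Real.log d := by
  set X := ρ - σ
  set e := (1/2) * traceNorm X with he_def
  have hX : X.IsHermitian := hρ.1.1.sub hσ.1.1
  have hsplit : ρ + X⁻ = σ + X⁺ := by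
    rw [add_comm σ, ← sub_eq_sub_iff_add_eq_add, CFC.posPart_sub_negPart X hX.isSelfAdjoint]
  have htr : X.trace.re = 0 := by simp [X, Matrix.trace_sub, hρ.2, hσ.2]
  have hnorm := hX.traceNorm_eq
  have hdiff := hX.re_trace_posPart_sub_negPart
  have hPe : (X⁺).trace.re = e := by linarith
  have hNe : (X⁻).trace.re = e := by linarith
  have h₁ := hM.obsEntropy_sub_le hρ hσ (Matrix.posSemidef_posPart X)
    (Matrix.posSemidef_negPart X) hPe hNe hsplit
  have h₂ := hM.obsEntropy_sub_le hσ hρ (Matrix.posSemidef_negPart X)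
    (Matrix.posSemidef_posPart X) hNe hPe hsplit.symm
  rw [Fintype.card_fin] at h₁ h₂
  have he : 0 ≤ e := hPe ▸ (Matrix.posSemidef_posPart X).re_trace_nonneg
  calc |obsEntropy M ρ - obsEntropy M σ| ≤ gFun e + e * Real.log d :=
        abs_sub_le_iff.mpr ⟨h₁, h₂⟩
    _ ≤ gFun ε + ε * Real.log d :=
        add_le_add (gFun_monotoneOn he (he.trans hε) hε) (by gcongr)
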